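/- arXiv:math/0511673 — 3 statements merged into one kernel-verified Lean document; each statement's English description precedes it below -/
import Mathlib

section
/- Let F ∈ ℂ[x₀,…,x₄] be a nonzero homogeneous polynomial of degree n ≥ 2 defining a nodal hypersurface V(F) ⊂ ℙ⁴. Then every line in ℙ⁴ contains at most n−1 nodes of V(F). (This is the case k = 1 of the paper's Lemma stating that a curve of degree k in ℙ⁴ contains at most k(n−1) nodes.) -/
open MvPolynomial AlgebraicGeometry

noncomputable section

/-- Points of `ℙ⁴` over `ℂ`, identified with classes of nonzero vectors of `ℂ⁵`. -/
abbrev P4 := Projectivization ℂ (Fin 5 → ℂ)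

/-- `p` is a singular point of the hypersurface `V(F) ⊂ ℙ⁴`: all partial
derivatives of `F` vanish at (a representative of) `p`. -/
def PSing (F : MvPolynomial (Fin 5) ℂ) (p : P4) : Prop :=
  ∀ i : Fin 5, eval p.rep (pderiv i F) = 0

/-- `p` is a node of `V(F)`: it is singular and the Hessian matrix has rank `4`. -/
def PNode (F : MvPolynomial (Fin 5) ℂ) (p : P4) : Prop :=
  PSing F p ∧
    Matrix.rank (Matrix.of fun i j : Fin 5 => eval p.rep (pderiv i (pderiv j F))) = 4

/-- `V(F)` is a nodal hypersurface: every singular point is a node. -/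
def IsNodal (F : MvPolynomial (Fin 5) ℂ) : Prop :=
  ∀ p : P4, PSing F p → PNode F p

/-- `V(F)` has at most `k` nodes (for a nodal `V(F)` the nodes are exactly the
singular points): any finite set of singular points has cardinality at most `k`. -/
def AtMostNodes (F : MvPolynomial (Fin 5) ℂ) (k : ℕ) : Prop :=
  ∀ T : Finset P4, (∀ p ∈ T, PSing F p) → T.card ≤ k

/-!
If all partial derivatives of `F` vanished on the plane `W`, differentiating them along `W`
would show that the Hessian at a point of the line `ℙ(W)` kills `W`, so that its rank is at
most `3`; nodality forbids this. Hence some `G = ∂F/∂xᵢ`, homogeneous of degree `n - 1`, does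
not vanish identically on `W`, and every node on the line is a zero of `G`. In affine
coordinates `[u + t • x]` on the line, with `G x ≠ 0`, these zeros are roots of the polynomial
`t ↦ G (u + t • x)`, which has degree at most `n - 1` and is nonzero because its leading
coefficient is `G x`.
-/

open Module

theorem Submodule.exists_linearIndependent_pair_span_eq {K V : Type*} [Field K] [AddCommGroup V]
    [Module K V] {W : Submodule K V} (hW : finrank K W = 2) {x : V} (hxW : x ∈ W) (hx : x ≠ 0) :
    ∃ u, LinearIndependent K ![x, u] ∧ span K {x, u} = W := by
  have : FiniteDimensional K W := Module.finite_of_finrank_eq_succ hW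
  obtain ⟨u, hu⟩ := exists_linearIndependent_pair_of_one_lt_finrank (R := K) (M := W)
    (by omega) (x := ⟨x, hxW⟩) (by simpa using hx)
  have hind : LinearIndependent K ![x, (u : V)] := by
    have h := hu.map' W.subtype W.ker_subtype
    rwa [show W.subtype ∘ ![⟨x, hxW⟩, u] = ![x, ↑u] by ext i; fin_cases i <;> rfl] at h
  refine ⟨u, hind, eq_of_le_of_finrank_le ?_ ?_⟩
  · rw [span_le, Set.insert_subset_iff, Set.singleton_subset_iff]
    exact ⟨hxW, u.2⟩
  · rw [hW, ← Matrix.range_cons_cons_empty x u ![], finrank_span_eq_card hind]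
    simp

theorem Projectivization.rep_mk_mem {K V : Type*} [DivisionRing K] [AddCommGroup V]
    [Module K V] {W : Submodule K V} {v : V} (hv : v ≠ 0) (hvW : v ∈ W) :
    (mk K v hv).rep ∈ W := by
  obtain ⟨a, ha⟩ := exists_smul_eq_mk_rep K v hv
  exact ha ▸ W.smul_of_tower_mem a hvW

namespace MvPolynomial

variable {σ R K : Type*}

theorem IsHomogeneous.eval_smul [CommSemiring R] {φ : MvPolynomial σ R} {m : ℕ}
    (h : φ.IsHomogeneous m) (c : R) (x : σ → R) : eval (c • x) φ = c ^ m * eval x φ := by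
  rw [eval_eq, eval_eq, Finset.mul_sum]
  refine Finset.sum_congr rfl fun d hd => ?_
  have hdeg : ∑ i ∈ d.support, d i = m := by
    simpa [Finsupp.weight_apply, Finsupp.sum] using h (mem_support_iff.mp hd)
  simp only [Pi.smul_apply, smul_eq_mul, mul_pow, Finset.prod_mul_distrib,
    Finset.prod_pow_eq_pow_sum, hdeg]
  ring

theorem derivative_aeval [CommSemiring R] [Fintype σ] (L : σ → Polynomial R)
    (P : MvPolynomial σ R) :
    Polynomial.derivative (aeval L P) =
      ∑ j, aeval L (pderiv j P) * Polynomial.derivative (L j) := by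
  induction P using MvPolynomial.induction_on with
  | C a => simp
  | add p q hp hq => simp only [map_add, hp, hq, add_mul, Finset.sum_add_distrib]
  | mul_X p i hp =>
    classical
    simp only [map_mul, aeval_X, Polynomial.derivative_mul, hp, Finset.sum_mul, pderiv_mul,
      pderiv_X, map_add, add_mul, Finset.sum_add_distrib]
    simp [Pi.single_apply, mul_comm, mul_assoc]

def restrictLine [CommSemiring R] (P : MvPolynomial σ R) (v w : σ → R) : Polynomial R :=
  aeval (fun j => Polynomial.C (v j) + Polynomial.C (w j) * Polynomial.X) P

section restrictLine

variable [CommSemiring R] (P : MvPolynomial σ R) (v w : σ → R)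

theorem eval_restrictLine (t : R) : (P.restrictLine v w).eval t = eval (v + t • w) P := by
  rw [restrictLine, ← Polynomial.coe_aeval_eq_eval, comp_aeval_apply, aeval_eq_eval]
  congr
  funext j
  simp only [map_add, map_mul, Polynomial.aeval_C, Polynomial.aeval_X, Algebra.algebraMap_self,
    RingHom.id_apply, Pi.add_apply, Pi.smul_apply, smul_eq_mul, mul_comm]

theorem natDegree_restrictLine_le {d : ℕ} (h : P.totalDegree ≤ d) :
    (P.restrictLine v w).natDegree ≤ d := by
  simpa [restrictLine] using aeval_natDegree_le (n := 1) P h _ fun j =>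
    (Polynomial.natDegree_add_le _ _).trans <| by
      simpa using (Polynomial.natDegree_C_mul_le _ _).trans Polynomial.natDegree_X_le

theorem derivative_restrictLine_eval_zero [Fintype σ] :
    (Polynomial.derivative (P.restrictLine v w)).eval 0 = ∑ j, w j * eval v (pderiv j P) := by
  rw [restrictLine, derivative_aeval, Polynomial.eval_finsetSum]
  refine Finset.sum_congr rfl fun j _ => ?_
  rw [← restrictLine, Polynomial.eval_mul, eval_restrictLine, mul_comm]
  simp

end restrictLine

theorem sum_mul_eval_pderiv_eq_zero_of_forall_eval_add_smul_eq_zero [CommRing R] [IsDomain R]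
    [Infinite R] [Fintype σ] {P : MvPolynomial σ R} {v w : σ → R}
    (h : ∀ t : R, eval (v + t • w) P = 0) : ∑ j, w j * eval v (pderiv j P) = 0 := by
  have hline : P.restrictLine v w = 0 :=
    Polynomial.funext fun t => by simp [eval_restrictLine, h]
  rw [← derivative_restrictLine_eval_zero, hline, Polynomial.derivative_zero,
    Polynomial.eval_zero]

def hessian [CommSemiring R] (F : MvPolynomial σ R) (v : σ → R) : Matrix σ σ R :=
  Matrix.of fun i j => eval v (pderiv i (pderiv j F))

theorem _root_.Matrix.rank_add_finrank_le_of_le_ker {m n : Type*} [Fintype n] [Field K]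
    (M : Matrix m n K) {W : Submodule K (n → K)} (h : W ≤ LinearMap.ker M.mulVecLin) :
    M.rank + finrank K W ≤ Fintype.card n := by
  rw [Matrix.rank, ← Module.finrank_fintype_fun_eq_card K,
    ← LinearMap.finrank_range_add_finrank_ker M.mulVecLin]
  exact Nat.add_le_add_left (Submodule.finrank_mono h) _

theorem rank_hessian_add_finrank_le [Field K] [Infinite K] [Fintype σ] {F : MvPolynomial σ K}
    {W : Submodule K (σ → K)} (hW : ∀ i, ∀ x ∈ W, eval x (pderiv i F) = 0) {v : σ → K}
    (hv : v ∈ W) : (F.hessian v).rank + finrank K W ≤ Fintype.card σ := by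
  rw [← Matrix.rank_transpose]
  refine Matrix.rank_add_finrank_le_of_le_ker _ fun w hw => ?_
  rw [LinearMap.mem_ker, Matrix.mulVecLin_apply]
  funext i
  -- entry `i` of `(F.hessian v)ᵀ *ᵥ w` is the derivative of `∂ᵢF` at `v` along `w`
  simpa [Matrix.mulVec, dotProduct, hessian, mul_comm] using
    sum_mul_eval_pderiv_eq_zero_of_forall_eval_add_smul_eq_zero
      fun t => hW i _ (W.add_mem hv (W.smul_mem t hw))

section Field

variable [Field K] {G : MvPolynomial σ K} {d : ℕ}

theorem IsHomogeneous.restrictLine_ne_zero [Infinite K] (hG : G.IsHomogeneous d) (u : σ → K)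
    {x : σ → K} (hx : eval x G ≠ 0) : G.restrictLine u x ≠ 0 := by
  intro h
  -- `G (x + s • u) = s ^ d * G (u + s⁻¹ • x)` vanishes for `s ≠ 0`, hence also at `s = 0`
  have hroots : ∀ s : K, s ≠ 0 → (G.restrictLine x u).IsRoot s := by
    intro s hs
    rw [Polynomial.IsRoot, eval_restrictLine,
      show x + s • u = s • (u + s⁻¹ • x) by
        rw [smul_add, smul_smul, mul_inv_cancel₀ hs, one_smul, add_comm],
      hG.eval_smul, ← eval_restrictLine, h, Polynomial.eval_zero, mul_zero]
  have h' : G.restrictLine x u = 0 := Polynomial.eq_zero_of_infinite_isRoot _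
    ((Set.finite_singleton 0).infinite_compl.mono hroots)
  apply hx
  simpa [eval_restrictLine] using congr_arg (Polynomial.eval 0) h'

theorem IsHomogeneous.exists_isRoot_restrictLine (hG : G.IsHomogeneous d) {x u y : σ → K}
    (hx : eval x G ≠ 0) (hy : y ∈ Submodule.span K {x, u}) (hy0 : y ≠ 0)
    (hyG : eval y G = 0) :
    ∃ a t : K, (G.restrictLine u x).IsRoot t ∧ y = a • (u + t • x) := by
  obtain ⟨b, a, rfl⟩ := Submodule.mem_span_pair.mp hy
  have ha : a ≠ 0 := by
    rintro rfl
    rw [zero_smul, add_zero] at hy0 hyG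
    rw [hG.eval_smul] at hyG
    exact mul_ne_zero (pow_ne_zero _ (left_ne_zero_of_smul hy0)) hx hyG
  have hy : b • x + a • u = a • (u + (b / a) • x) := by
    rw [smul_add, smul_smul, mul_div_cancel₀ _ ha, add_comm]
  refine ⟨a, b / a, ?_, hy⟩
  rw [hy, hG.eval_smul] at hyG
  rw [Polynomial.IsRoot, eval_restrictLine]
  exact (mul_eq_zero.mp hyG).resolve_left (pow_ne_zero _ ha)

theorem IsHomogeneous.card_le_of_forall_mem_line [Infinite K] (hG : G.IsHomogeneous d)
    {W : Submodule K (σ → K)} (hW : finrank K W = 2) {x : σ → K} (hxW : x ∈ W)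
    (hx : eval x G ≠ 0) (T : Finset (Projectivization K (σ → K)))
    (hT : ∀ p ∈ T, p.rep ∈ W ∧ eval p.rep G = 0) : T.card ≤ d := by
  classical
  obtain ⟨x, hxW, hx0, hx⟩ : ∃ x ∈ W, x ≠ 0 ∧ eval x G ≠ 0 := by
    by_cases h0 : x = 0
    · have hWbot : W ≠ ⊥ := by rintro rfl; simp at hW
      obtain ⟨y, hyW, hy⟩ := Submodule.exists_mem_ne_zero_of_ne_bot hWbot
      refine ⟨y, hyW, hy, fun hyG => hx ?_⟩
      rw [h0, ← zero_smul K y, hG.eval_smul, hyG, mul_zero]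
    · exact ⟨x, hxW, h0, hx⟩
  obtain ⟨u, hind, hspan⟩ := Submodule.exists_linearIndependent_pair_span_eq hW hxW hx0
  have hline (t : K) : u + t • x ≠ 0 := fun h =>
    one_ne_zero (LinearIndependent.pair_iff.mp hind t 1 (by rwa [one_smul, add_comm])).2
  have hT_sub : T ⊆ (G.restrictLine u x).roots.toFinset.image
      fun t => Projectivization.mk K _ (hline t) := by
    intro p hp
    obtain ⟨hpW, hpG⟩ := hT p hp
    obtain ⟨a, t, ht, hrep⟩ :=
      hG.exists_isRoot_restrictLine hx (hspan ▸ hpW) p.rep_nonzero hpG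
    refine Finset.mem_image.mpr ⟨t, ?_, ?_⟩
    · rwa [Multiset.mem_toFinset, Polynomial.mem_roots (hG.restrictLine_ne_zero u hx)]
    · conv_rhs => rw [← p.mk_rep]
      exact ((Projectivization.mk_eq_mk_iff' K _ _ _ _).mpr ⟨a, hrep.symm⟩).symm
  calc T.card ≤ _ := Finset.card_le_card hT_sub
    _ ≤ _ := Finset.card_image_le
    _ ≤ Multiset.card _ := Multiset.toFinset_card_le _
    _ ≤ _ := Polynomial.card_roots' _
    _ ≤ d := natDegree_restrictLine_le _ _ _ hG.totalDegree_le

end Field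

end MvPolynomial

theorem IsNodal.exists_eval_pderiv_ne_zero {F : MvPolynomial (Fin 5) ℂ} (hF : IsNodal F)
    {W : Submodule ℂ (Fin 5 → ℂ)} (hW : 2 ≤ finrank ℂ W) :
    ∃ i, ∃ x ∈ W, eval x (pderiv i F) ≠ 0 := by
  by_contra! hvan
  obtain ⟨v, hvW, hv⟩ := W.exists_mem_ne_zero_of_ne_bot (by rintro rfl; simp at hW)
  have hrep := Projectivization.rep_mk_mem hv hvW
  have hrank : (F.hessian (Projectivization.mk ℂ v hv).rep).rank = 4 :=
    (hF _ fun i => hvan i _ hrep).2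
  have := rank_hessian_add_finrank_le hvan hrep
  rw [hrank, Fintype.card_fin] at this
  omega

theorem line_contains_at_most_nodes_general
    (n : ℕ)
    (F : MvPolynomial (Fin 5) ℂ) (hhom : F.IsHomogeneous n)
    (hnodal : IsNodal F)
    (W : Submodule ℂ (Fin 5 → ℂ)) (hW : Module.finrank ℂ W = 2) :
    ∀ T : Finset P4, (∀ p ∈ T, PSing F p ∧ p.rep ∈ W) → T.card ≤ n - 1 := by
  intro T hT
  obtain ⟨i, x, hxW, hx⟩ := hnodal.exists_eval_pderiv_ne_zero hW.ge
  exact hhom.pderiv.card_le_of_forall_mem_line hW hxW hx T fun p hp =>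
    ⟨(hT p hp).2, (hT p hp).1 i⟩

/-- A line in `ℙ⁴` contains at most `n − 1` nodes of a nodal hypersurface `V(F)`
of degree `n ≥ 2`. -/
theorem line_contains_at_most_nodes
    (n : ℕ) (hn : 2 ≤ n)
    (F : MvPolynomial (Fin 5) ℂ) (hF : F ≠ 0) (hhom : F.IsHomogeneous n)
    (hnodal : IsNodal F)
    (W : Submodule ℂ (Fin 5 → ℂ)) (hW : Module.finrank ℂ W = 2) :
    ∀ T : Finset P4, (∀ p ∈ T, PSing F p ∧ p.rep ∈ W) → T.card ≤ n - 1 :=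
  line_contains_at_most_nodes_general n F hhom hnodal W hW
end
end

section
/- Let Σ be a finite set of points in ℙ^N and let d ≥ 2 be an integer. If for every integer k ≥ 1 no dk + 2 points of Σ lie in a k-plane of ℙ^N, then Σ imposes independent conditions on forms of degree d: for every p ∈ Σ there exists a homogeneous polynomial of degree d in N+1 variables vanishing at every point of Σ \ {p} but not at p. -/
open MvPolynomial

noncomputable section

/-- Points of `ℙ^N` over `ℂ`. -/
abbrev PN (N : ℕ) := Projectivization ℂ (Fin (N + 1) → ℂ)


noncomputable section HornSec

open Submodule Module
set_option linter.unusedSectionVars false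

variable {K : Type*} [Field K] {V : Type*} [AddCommGroup V] [Module K V]
variable {ι : Type*} [Fintype ι] [DecidableEq ι]

variable (K) in
/-- Linear independence of a finite subfamily, in hands-on form. -/
def IndepOn (v : ι → V) (I : Finset ι) : Prop :=
  ∀ c : ι → K, ∑ y ∈ I, c y • v y = 0 → ∀ y ∈ I, c y = 0

theorem IndepOn.mono {v : ι → V} {I J : Finset ι} (hIJ : I ⊆ J) (hJ : IndepOn K v J) :
    IndepOn K v I := by
  intro c hc y hy
  have h0 : ∀ z, (if z ∈ I then c z else 0) • v z = (if z ∈ I then c z • v z else 0) := by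
    intro z; split <;> simp
  have hsum : ∑ z ∈ J, (if z ∈ I then c z else 0) • v z = 0 := by
    rw [← Finset.sum_subset hIJ]
    · rw [Finset.sum_congr rfl (fun z hz => by rw [h0, if_pos hz])]; exact hc
    · intro z _ hz; rw [h0, if_neg hz]
  have := hJ _ hsum y (hIJ hy)
  rwa [if_pos hy] at this

theorem mem_spanF_iff {v : ι → V} {I : Finset ι} {w : V} :
    w ∈ span K (v '' (I : Set ι)) ↔
      ∃ c : ι → K, (∀ y ∉ I, c y = 0) ∧ ∑ y ∈ I, c y • v y = w := by
  constructor
  · intro hw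
    obtain ⟨l, hl, hlw⟩ := (Finsupp.mem_span_image_iff_linearCombination K).mp hw
    refine ⟨fun y => l y, fun y hy => ?_, ?_⟩
    · by_contra h
      exact hy (hl (Finsupp.mem_support_iff.mpr h))
    · rw [← hlw, Finsupp.linearCombination_apply, Finsupp.sum]
      refine (Finset.sum_subset (fun y hy => hl hy) ?_).symm
      intro y _ hy
      have : l y = 0 := Finsupp.notMem_support_iff.mp hy
      simp [this]
  · rintro ⟨c, _, rfl⟩
    exact Submodule.sum_mem _ fun y hy =>
      Submodule.smul_mem _ _ (Submodule.subset_span ⟨y, hy, rfl⟩)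

theorem IndepOn.insert {v : ι → V} {I : Finset ι} {x : ι} (hI : IndepOn K v I)
    (hx : v x ∉ span K (v '' (I : Set ι))) : IndepOn K v (insert x I) := by
  have hxI : x ∉ I := fun h => hx (Submodule.subset_span ⟨x, h, rfl⟩)
  intro c hc y hy
  rw [Finset.sum_insert hxI] at hc
  have hcx : c x = 0 := by
    by_contra h
    apply hx
    have h1 : c x • v x = -∑ y ∈ I, c y • v y := eq_neg_of_add_eq_zero_left hc
    have h2 : v x = (c x)⁻¹ • -(∑ y ∈ I, c y • v y) := by
      rw [← h1, inv_smul_smul₀ h]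
    rw [h2]
    exact Submodule.smul_mem _ _ (Submodule.neg_mem _ (Submodule.sum_mem _ fun z hz =>
      Submodule.smul_mem _ _ (Submodule.subset_span ⟨z, hz, rfl⟩)))
  rcases Finset.mem_insert.mp hy with rfl | hy
  · exact hcx
  · exact hI c (by rwa [hcx, zero_smul, zero_add] at hc) y hy

/-- If `x` has a representation over independent `I` using `y0`, then `x` is not in the
span of `I.erase y0`. -/
theorem notMem_span_erase {v : ι → V} {I : Finset ι} {x y0 : ι} {c : ι → K}
    (hI : IndepOn K v I) (hsum : ∑ y ∈ I, c y • v y = v x) (hy0 : c y0 ≠ 0) (hy0I : y0 ∈ I) :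
    v x ∉ span K (v '' ((I.erase y0 : Finset ι) : Set ι)) := by
  intro hmem
  obtain ⟨c', hc's, hc'⟩ := mem_spanF_iff.mp hmem
  have hsub : I.erase y0 ⊆ I := Finset.erase_subset _ _
  have hc'I : ∑ y ∈ I, c' y • v y = v x := by
    rw [← hc']
    refine (Finset.sum_subset hsub ?_).symm
    intro z hz hz'
    rw [hc's z hz', zero_smul]
  have h0 : ∑ y ∈ I, (c y - c' y) • v y = 0 := by
    simp only [sub_smul, Finset.sum_sub_distrib, hsum, hc'I, sub_self]
  have := hI _ h0 y0 hy0I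
  have hcy0' : c' y0 = 0 := hc's y0 (Finset.notMem_erase _ _)
  rw [hcy0', sub_zero] at this
  exact hy0 this

theorem IndepOn.linearIndependent {v : ι → V} {I : Finset ι} (hI : IndepOn K v I) :
    LinearIndependent K (fun y : (I : Set ι) => v y) := by
  rw [Fintype.linearIndependent_iff]
  intro g hg
  set c : ι → K := fun y => if h : y ∈ I then g ⟨y, h⟩ else 0 with hcdef
  have hsum : ∑ y ∈ I, c y • v y = 0 := by
    rw [← Finset.sum_coe_sort I (fun y => c y • v y), ← hg]
    refine Finset.sum_congr rfl fun i _ => ?_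
    obtain ⟨i, hi⟩ := i
    simp only [hcdef, dif_pos hi]
  intro i
  obtain ⟨i, hi⟩ := i
  have hi' : i ∈ I := hi
  have := hI c hsum i hi'
  simpa only [hcdef, dif_pos hi'] using this

theorem IndepOn.finrank_span {v : ι → V} {I : Finset ι} (hI : IndepOn K v I) :
    finrank K (span K (v '' (I : Set ι))) = I.card := by
  have h := finrank_span_eq_card hI.linearIndependent
  rw [show (fun y : (I : Set ι) => v ↑y) = v ∘ Subtype.val from rfl, Set.range_comp,
    Subtype.range_coe] at h
  simpa using h

end HornSec

section Dyn

open Submodule Module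

variable {K : Type*} [Field K] {V : Type*} [AddCommGroup V] [Module K V]
variable {ι : Type*} [Fintype ι] [DecidableEq ι]

variable (K) in
/-- `c` represents `v x` as a combination of the subfamily on `I`. -/
def IsRep (v : ι → V) (I : Finset ι) (x : ι) (c : ι → K) : Prop :=
  (∀ y ∉ I, c y = 0) ∧ ∑ y ∈ I, c y • v y = v x

variable (K) in
def Step {d : ℕ} (v : ι → V) (F : Fin d → Finset ι) (x y : ι) : Prop :=
  ∃ i c, IsRep K v (F i) x c ∧ c y ≠ 0

inductive Reach (K : Type*) [Field K] {V : Type*} [AddCommGroup V] [Module K V]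
    {ι : Type*} [Fintype ι] [DecidableEq ι] {d : ℕ}
    (v : ι → V) (F : Fin d → Finset ι) (x0 : ι) : ℕ → ι → Prop
  | zero : Reach K v F x0 0 x0
  | succ {n x y} : Reach K v F x0 n x → Step K v F x y → Reach K v F x0 (n + 1) y

def Disj {d : ℕ} (F : Fin d → Finset ι) : Prop :=
  ∀ i j : Fin d, i ≠ j → ∀ x, x ∈ F i → x ∉ F j

variable (K) in
def Ind {d : ℕ} (v : ι → V) (F : Fin d → Finset ι) : Prop :=
  ∀ i, IndepOn K v (F i)

theorem reach_mem {d : ℕ} {v : ι → V} {F : Fin d → Finset ι} {v0 z : ι} {n : ℕ}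
    (h : Reach K v F v0 n z) : z = v0 ∨ ∃ i, z ∈ F i := by
  induction h with
  | zero => exact Or.inl rfl
  | succ _ hstep _ =>
    obtain ⟨i, c, hrep, hcz⟩ := hstep
    right; exact ⟨i, by by_contra h; exact hcz (hrep.1 _ h)⟩

theorem transfer {d : ℕ} {v : ι → V} {F F1 : Fin d → Finset ι} {i j : Fin d}
    (hij : i ≠ j) {x : ι} (hxFi : x ∈ F i) (hxj : x ∉ F j)
    (hF1i : F1 i = (F i).erase x) (hF1j : F1 j = insert x (F j))
    (hF1o : ∀ l, l ≠ i → l ≠ j → F1 l = F l) :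
    ∀ {m y v0}, Reach K v F v0 m y →
      Reach K v F1 v0 m y ∨ ∃ m' ≤ m, Reach K v F v0 m' x := by
  intro m y v0 hr
  induction hr with
  | zero => exact Or.inl Reach.zero
  | @succ m0 y' y hrm hstep ih =>
    rcases ih with h1 | ⟨m', hm', hrx⟩
    · obtain ⟨i', c', hrep, hcy⟩ := hstep
      by_cases hii : i' = i
      · subst hii
        by_cases hcx : c' x = 0
        · left
          refine Reach.succ h1 ⟨i', c', ?_, hcy⟩
          rw [hF1i]
          constructor
          · intro z hz
            by_cases hzx : z = x
            · subst hzx; exact hcx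
            · exact hrep.1 z fun hzF => hz (Finset.mem_erase.mpr ⟨hzx, hzF⟩)
          · rw [Finset.sum_erase _ (by rw [hcx, zero_smul])]
            exact hrep.2
        · exact Or.inr ⟨m0 + 1, le_refl _, Reach.succ hrm ⟨i', c', hrep, hcx⟩⟩
      · by_cases hjj : i' = j
        · subst hjj
          left
          refine Reach.succ h1 ⟨i', c', ?_, hcy⟩
          rw [hF1j]
          constructor
          · intro z hz
            exact hrep.1 z fun hzF => hz (Finset.mem_insert_of_mem hzF)
          · rw [Finset.sum_insert hxj, hrep.1 x hxj, zero_smul, zero_add]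
            exact hrep.2
        · left
          refine Reach.succ h1 ⟨i', c', ?_, hcy⟩
          rw [hF1o i' hii hjj]
          exact hrep
    · exact Or.inr ⟨m', le_trans hm' (Nat.le_succ _), hrx⟩

theorem aug' {d : ℕ} {v : ι → V} :
    ∀ (n : ℕ) (F : Fin d → Finset ι), Disj F → Ind K v F →
      ∀ (v0 x : ι) (j : Fin d), (∀ i, v0 ∉ F i) → Reach K v F v0 n x →
        v x ∉ span K (v '' ((F j : Finset ι) : Set ι)) →
        ∃ F' : Fin d → Finset ι, Disj F' ∧ Ind K v F' ∧
          ∑ l, (F' l).card = (∑ l, (F l).card) + 1 := by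
  intro n
  induction n using Nat.strong_induction_on with
  | _ n IH =>
  intro F hdisj hind v0 x j hunc hr hxj
  cases hr with
  | zero =>
    -- x = v0 ; just insert it into F j
    refine ⟨fun l => if l = j then insert v0 (F l) else F l, ?_, ?_, ?_⟩
    · intro l m hlm z hzl hzm
      have hmem : ∀ l z, z ∈ (if l = j then insert v0 (F l) else F l) →
          (z = v0 ∧ l = j) ∨ z ∈ F l := by
        intro l z hz
        by_cases hl : l = j
        · rw [if_pos hl] at hz
          rcases Finset.mem_insert.mp hz with rfl | hz
          · exact Or.inl ⟨rfl, hl⟩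
          · exact Or.inr hz
        · rw [if_neg hl] at hz; exact Or.inr hz
      rcases hmem l z hzl with ⟨rfl, rfl⟩ | hzl' <;>
        rcases hmem m z hzm with ⟨h1, h2⟩ | hzm'
      · exact hlm h2.symm
      · exact hunc m hzm'
      · subst h1; exact hunc l hzl'
      · exact hdisj l m hlm z hzl' hzm'
    · intro l
      by_cases hl : l = j
      · subst hl; simp only [if_pos]
        exact (hind l).insert hxj
      · simp only [if_neg hl]; exact hind l
    · have h1 : ∀ l, (if l = j then insert v0 (F l) else F l).card
          = (F l).card + (if l = j then 1 else 0) := by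
        intro l
        by_cases hl : l = j
        · subst hl
          simp [Finset.card_insert_of_notMem (hunc l)]
        · simp [hl]
      simp only [h1, Finset.sum_add_distrib, Finset.sum_ite_eq' Finset.univ j,
        Finset.mem_univ, if_pos]
  | succ hrm hstep =>
    rename_i m x_pre
    obtain ⟨i, c, hrep, hcx⟩ := hstep
    have hxFi : x ∈ F i := by by_contra h; exact hcx (hrep.1 x h)
    have hvxFi : v x ∈ span K (v '' ((F i : Finset ι) : Set ι)) :=
      Submodule.subset_span ⟨x, hxFi, rfl⟩
    have hij : i ≠ j := by rintro rfl; exact hxj hvxFi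
    have hxj' : x ∉ F j := fun h => hxj (Submodule.subset_span ⟨x, h, rfl⟩)
    set F1 : Fin d → Finset ι :=
      fun l => if l = i then (F i).erase x else if l = j then insert x (F j) else F l with hF1
    have hF1i : F1 i = (F i).erase x := by simp [hF1]
    have hF1j : F1 j = insert x (F j) := by simp [hF1, hij.symm]
    have hF1o : ∀ l, l ≠ i → l ≠ j → F1 l = F l := by
      intro l h1 h2; simp [hF1, h1, h2]
    have hdisj1 : Disj F1 := by
      have hmem : ∀ (a : Fin d) (z : ι), z ∈ F1 a → (a = j ∧ z = x) ∨ (z ∈ F a ∧ ¬(a = i ∧ z = x)) := by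
        intro a z hz
        by_cases ha : a = i
        · subst ha; rw [hF1i] at hz
          exact Or.inr ⟨Finset.mem_of_mem_erase hz, fun h => (Finset.mem_erase.mp hz).1 h.2⟩
        · by_cases ha2 : a = j
          · subst ha2; rw [hF1j] at hz
            rcases Finset.mem_insert.mp hz with rfl | hz
            · exact Or.inl ⟨rfl, rfl⟩
            · exact Or.inr ⟨hz, fun h => ha h.1⟩
          · rw [hF1o a ha ha2] at hz; exact Or.inr ⟨hz, fun h => ha h.1⟩
      intro a b hab z hza hzb
      have hcase : ∀ (a b : Fin d), a ≠ b → (a = j ∧ z = x) → (z ∈ F b ∧ ¬(b = i ∧ z = x)) →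
          False := by
        rintro a b hab ⟨rfl, rfl⟩ ⟨hzb', hb⟩
        by_cases hbi : b = i
        · exact hb ⟨hbi, rfl⟩
        · exact hdisj i b (fun h => hbi h.symm) z hxFi hzb'
      rcases hmem a z hza with h1 | h1 <;> rcases hmem b z hzb with h2 | h2
      · exact hab (h1.1.trans h2.1.symm)
      · exact hcase a b hab h1 h2
      · exact hcase b a hab.symm h2 h1
      · exact hdisj a b hab z h1.1 h2.1
    have hind1 : Ind K v F1 := by
      intro l
      by_cases hl : l = i
      · subst hl; rw [hF1i]
        exact (hind l).mono (Finset.erase_subset _ _)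
      · by_cases hl2 : l = j
        · subst hl2; rw [hF1j]
          exact (hind l).insert hxj
        · rw [hF1o l hl hl2]; exact hind l
    have hunc1 : ∀ l, v0 ∉ F1 l := by
      intro l
      by_cases hl : l = i
      · subst hl; rw [hF1i]
        exact fun h => hunc l (Finset.mem_of_mem_erase h)
      · by_cases hl2 : l = j
        · subst hl2; rw [hF1j]
          intro h
          rcases Finset.mem_insert.mp h with rfl | h
          · exact hunc i hxFi
          · exact hunc l h
        · rw [hF1o l hl hl2]; exact hunc l
    have hw : v x_pre ∉ span K (v '' ((F1 i : Finset ι) : Set ι)) := by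
      rw [hF1i]
      exact notMem_span_erase (hind i) hrep.2 hcx hxFi
    have hcard1 : ∑ l, (F1 l).card = ∑ l, (F l).card := by
      have e1 : ((F i).erase x).card + 1 = (F i).card := Finset.card_erase_add_one hxFi
      have e2 : (insert x (F j)).card = (F j).card + 1 := Finset.card_insert_of_notMem hxj'
      have key : ∀ G : Fin d → Finset ι, ∑ l, (G l).card
          = (G i).card + ((G j).card + ∑ l ∈ (Finset.univ.erase i).erase j, (G l).card) := by
        intro G
        rw [← Finset.add_sum_erase _ _ (Finset.mem_univ i),
          ← Finset.add_sum_erase _ _ (Finset.mem_erase.mpr ⟨hij.symm, Finset.mem_univ j⟩)]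
      have congr_rest : ∑ l ∈ (Finset.univ.erase i).erase j, (F1 l).card
          = ∑ l ∈ (Finset.univ.erase i).erase j, (F l).card := by
        refine Finset.sum_congr rfl fun l hl => ?_
        have h1 := (Finset.mem_erase.mp hl).1
        have h2 := (Finset.mem_erase.mp (Finset.mem_of_mem_erase hl)).1
        rw [hF1o l h2 h1]
      rw [key F1, key F, hF1i, hF1j, congr_rest]
      omega
    rcases transfer hij hxFi hxj' hF1i hF1j hF1o hrm with h1 | ⟨m', hm', hrx⟩
    · obtain ⟨F', hd', hi', hc'⟩ :=
        IH m (Nat.lt_succ_self m) F1 hdisj1 hind1 v0 x_pre i hunc1 h1 hw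
      exact ⟨F', hd', hi', by rw [hc', hcard1]⟩
    · exact IH m' (Nat.lt_succ_of_le hm') F hdisj hind v0 x j hunc hrx hxj

end Dyn

section Count

open Submodule Module

variable {K : Type*} [Field K] {V : Type*} [AddCommGroup V] [Module K V]
variable {ι : Type*} [Fintype ι] [DecidableEq ι]

theorem aug {d : ℕ} {v : ι → V}
    (H : ∀ A : Finset ι, A.card ≤ d * finrank K (span K (v '' (A : Set ι))))
    (F : Fin d → Finset ι) (hdisj : Disj F) (hind : Ind K v F)
    (v0 : ι) (hunc : ∀ i, v0 ∉ F i) :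
    ∃ F' : Fin d → Finset ι, Disj F' ∧ Ind K v F' ∧
      ∑ l, (F' l).card = (∑ l, (F l).card) + 1 := by
  classical
  by_cases hex : ∃ n x j, Reach K v F v0 n x ∧ v x ∉ span K (v '' ((F j : Finset ι) : Set ι))
  · obtain ⟨n, x, j, hr, hxj⟩ := hex
    exact aug' n F hdisj hind v0 x j hunc hr hxj
  · exfalso
    push_neg at hex
    set Z : Finset ι := Finset.univ.filter (fun x => ∃ n, Reach K v F v0 n x) with hZdef
    have hZmem : ∀ x, x ∈ Z ↔ ∃ n, Reach K v F v0 n x := by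
      intro x; simp [hZdef]
    have hv0Z : v0 ∈ Z := (hZmem v0).mpr ⟨0, Reach.zero⟩
    -- every reachable x lies in span of (F i ∩ Z) for every i
    have hspanx : ∀ x ∈ Z, ∀ i, v x ∈ span K (v '' ((F i ∩ Z : Finset ι) : Set ι)) := by
      intro x hx i
      obtain ⟨n, hr⟩ := (hZmem x).mp hx
      obtain ⟨c, hcs, hcsum⟩ := mem_spanF_iff.mp (hex n x i hr)
      have hkey : ∀ y ∈ F i, y ∉ Z → c y = 0 := by
        intro y hyF hyZ
        by_contra hcy
        exact hyZ ((hZmem y).mpr ⟨n + 1, Reach.succ hr ⟨i, c, ⟨hcs, hcsum⟩, hcy⟩⟩)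
      refine mem_spanF_iff.mpr ⟨c, ?_, ?_⟩
      · intro y hy
        by_cases hyF : y ∈ F i
        · exact hkey y hyF (fun hyZ => hy (Finset.mem_inter.mpr ⟨hyF, hyZ⟩))
        · exact hcs y hyF
      · rw [← hcsum]
        refine Finset.sum_subset (Finset.inter_subset_left) ?_
        intro y hyF hy
        rw [hkey y hyF (fun hyZ => hy (Finset.mem_inter.mpr ⟨hyF, hyZ⟩)), zero_smul]
    haveI : FiniteDimensional K (span K (v '' ((Z : Finset ι) : Set ι))) :=
      FiniteDimensional.span_of_finite K ((Z : Set ι).toFinite.image v)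
    set r := finrank K (span K (v '' ((Z : Finset ι) : Set ι))) with hrdef
    have hri : ∀ i, r ≤ (F i ∩ Z).card := by
      intro i
      have hle : span K (v '' ((Z : Finset ι) : Set ι))
          ≤ span K (v '' ((F i ∩ Z : Finset ι) : Set ι)) := by
        rw [span_le]
        rintro w ⟨x, hxZ, rfl⟩
        exact hspanx x hxZ i
      haveI : FiniteDimensional K (span K (v '' ((F i ∩ Z : Finset ι) : Set ι))) :=
        FiniteDimensional.span_of_finite K (((F i ∩ Z : Finset ι) : Set ι).toFinite.image v)
      have := Submodule.finrank_mono hle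
      rwa [((hind i).mono Finset.inter_subset_left).finrank_span] at this
    have hZcard : Z.card = 1 + ∑ i, (F i ∩ Z).card := by
      have herase : Z.erase v0 = Finset.univ.biUnion (fun i => F i ∩ Z) := by
        ext z
        constructor
        · intro hz
          have hzZ := Finset.mem_of_mem_erase hz
          have hzne := (Finset.mem_erase.mp hz).1
          obtain ⟨n, hr⟩ := (hZmem z).mp hzZ
          rcases reach_mem hr with rfl | ⟨i, hi⟩
          · exact absurd rfl hzne
          · exact Finset.mem_biUnion.mpr ⟨i, Finset.mem_univ i, Finset.mem_inter.mpr ⟨hi, hzZ⟩⟩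
        · intro hz
          obtain ⟨i, _, hi⟩ := Finset.mem_biUnion.mp hz
          obtain ⟨hiF, hiZ⟩ := Finset.mem_inter.mp hi
          exact Finset.mem_erase.mpr ⟨fun h => hunc i (h ▸ hiF), hiZ⟩
      have hdis : ∀ i ∈ (Finset.univ : Finset (Fin d)), ∀ j ∈ (Finset.univ : Finset (Fin d)),
          i ≠ j → Disjoint (F i ∩ Z) (F j ∩ Z) := by
        intro i _ j _ hij
        rw [Finset.disjoint_left]
        intro z hz hz'
        exact hdisj i j hij z (Finset.mem_inter.mp hz).1 (Finset.mem_inter.mp hz').1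
      have h1 : (Z.erase v0).card + 1 = Z.card := Finset.card_erase_add_one hv0Z
      rw [← h1, herase, Finset.card_biUnion hdis]
      omega
    have hEd : Z.card ≤ d * r := H Z
    have hsum : d * r ≤ ∑ i, (F i ∩ Z).card := by
      calc d * r = ∑ _i : Fin d, r := by simp [Finset.sum_const, mul_comm]
      _ ≤ ∑ i, (F i ∩ Z).card := Finset.sum_le_sum fun i _ => hri i
    omega

theorem horn_aux {d : ℕ} {v : ι → V}
    (H : ∀ A : Finset ι, A.card ≤ d * finrank K (span K (v '' (A : Set ι)))) :
    ∀ (t : ℕ) (F : Fin d → Finset ι), Disj F → Ind K v F →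
      Fintype.card ι ≤ t + ∑ l, (F l).card →
      ∃ F' : Fin d → Finset ι, Disj F' ∧ Ind K v F' ∧ ∀ x : ι, ∃ i, x ∈ F' i := by
  intro t
  induction t with
  | zero =>
    intro F hdisj hind hcard
    refine ⟨F, hdisj, hind, ?_⟩
    have hdis : ∀ i ∈ (Finset.univ : Finset (Fin d)), ∀ j ∈ (Finset.univ : Finset (Fin d)),
        i ≠ j → Disjoint (F i) (F j) := by
      intro i _ j _ hij
      rw [Finset.disjoint_left]
      intro z hz hz'
      exact hdisj i j hij z hz hz'
    have hbu : (Finset.univ.biUnion F).card = ∑ l, (F l).card := Finset.card_biUnion hdis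
    have : Finset.univ.biUnion F = Finset.univ := by
      refine Finset.eq_of_subset_of_card_le (Finset.subset_univ _) ?_
      rw [hbu, Finset.card_univ]
      simpa using hcard
    intro x
    have : x ∈ Finset.univ.biUnion F := this ▸ Finset.mem_univ x
    obtain ⟨i, _, hi⟩ := Finset.mem_biUnion.mp this
    exact ⟨i, hi⟩
  | succ t IH =>
    intro F hdisj hind hcard
    by_cases hcov : ∀ x : ι, ∃ i, x ∈ F i
    · exact ⟨F, hdisj, hind, hcov⟩
    · push_neg at hcov
      obtain ⟨v0, hv0⟩ := hcov
      obtain ⟨F', hd', hi', hc'⟩ := aug H F hdisj hind v0 hv0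
      exact IH F' hd' hi' (by omega)

theorem horn {d : ℕ} (v : ι → V)
    (H : ∀ A : Finset ι, A.card ≤ d * finrank K (span K (v '' (A : Set ι)))) :
    ∃ F : Fin d → Finset ι, Disj F ∧ Ind K v F ∧ ∀ x : ι, ∃ i, x ∈ F i := by
  refine horn_aux H (Fintype.card ι) (fun _ => ∅) ?_ ?_ ?_
  · intro i j _ x hx; simp at hx
  · intro i c _ y hy; simp at hy
  · simp

end Count

set_option synthInstance.maxHeartbeats 800000
set_option maxHeartbeats 1600000
set_option linter.unusedVariables false

/-- (Edmonds / Eisenbud–Koh.) Let `S` be a finite set of points of `ℙ^N` and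
`d ≥ 2`. If for every `k ≥ 1` no `dk + 2` points of `S` lie in a `k`-plane,
then `S` imposes independent conditions on forms of degree `d`. -/
theorem independent_conditions_of_no_points_in_planes
    (N d : ℕ) (hd : 2 ≤ d) (S : Finset (PN N))
    (hplanes : ∀ k : ℕ, 1 ≤ k →
      ∀ W : Submodule ℂ (Fin (N + 1) → ℂ), Module.finrank ℂ W = k + 1 →
        ∀ T : Finset (PN N), T ⊆ S → (∀ p ∈ T, p.rep ∈ W) → T.card ≤ d * k + 1) :
    ∀ p ∈ S, ∃ G : MvPolynomial (Fin (N + 1)) ℂ, G.IsHomogeneous d ∧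
      (∀ q ∈ S, q ≠ p → eval q.rep G = 0) ∧ eval p.rep G ≠ 0 := by
  classical
  intro p hp
  set Wp : Submodule ℂ (Fin (N + 1) → ℂ) := ℂ ∙ p.rep with hWp
  set ι := {q // q ∈ S.erase p} with hι
  set u : ι → (Fin (N + 1) → ℂ) := fun q => (q : PN N).rep with hu
  set v : ι → ((Fin (N + 1) → ℂ) ⧸ Wp) := fun q => Wp.mkQ (u q) with hv
  have hprep : (p.rep : (Fin (N + 1) → ℂ)) ≠ 0 := Projectivization.rep_nonzero p
  have hmkp : Wp.mkQ p.rep = 0 := by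
    rw [Submodule.mkQ_apply, Submodule.Quotient.mk_eq_zero]
    exact Submodule.mem_span_singleton_self _
  -- the Edmonds-type condition in the quotient by p
  have H : ∀ A : Finset ι, A.card ≤ d *
      Module.finrank ℂ (Submodule.span ℂ (v '' (A : Set ι))) := by
    intro A
    set k := Module.finrank ℂ (Submodule.span ℂ (v '' (A : Set ι))) with hk
    set WA : Submodule ℂ (Fin (N + 1) → ℂ) := Submodule.span ℂ (insert p.rep (u '' (A : Set ι))) with hWA
    have hpWA : p.rep ∈ WA := Submodule.subset_span (Set.mem_insert _ _)
    have hWpWA : Wp ≤ WA := by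
      rw [hWp, Submodule.span_singleton_le_iff_mem]; exact hpWA
    have hmap : WA.map Wp.mkQ = Submodule.span ℂ (v '' (A : Set ι)) := by
      rw [hWA, Submodule.map_span, Set.image_insert_eq, hmkp, Submodule.span_insert_zero,
        Set.image_image]
    have hrank : Module.finrank ℂ WA = k + 1 := by
      have f := Wp.mkQ.comp WA.subtype
      have hrange : LinearMap.range (Wp.mkQ.comp WA.subtype) = WA.map Wp.mkQ := by
        rw [LinearMap.range_comp, Submodule.range_subtype]
      have hker : LinearMap.ker (Wp.mkQ.comp WA.subtype) = Wp.comap WA.subtype := by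
        rw [LinearMap.ker_comp, Submodule.ker_mkQ]
      have hrn := LinearMap.finrank_range_add_finrank_ker (Wp.mkQ.comp WA.subtype)
      rw [hrange, hker, hmap] at hrn
      have hkerdim : Module.finrank ℂ (Wp.comap WA.subtype) = 1 := by
        have e := Submodule.comapSubtypeEquivOfLe hWpWA
        rw [e.finrank_eq, hWp, finrank_span_singleton hprep]
      rw [hkerdim, ← hk] at hrn
      omega
    rcases Finset.eq_empty_or_nonempty A with rfl | ⟨q, hq⟩
    · simp
    · have hk1 : 1 ≤ k := by
        by_contra hk0
        have hk0' : k = 0 := by omega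
        have hbot : Submodule.span ℂ (v '' (A : Set ι)) = ⊥ :=
          Submodule.finrank_eq_zero.mp (by rw [← hk, hk0'])
        have hvq : v q = 0 := by
          have : v q ∈ Submodule.span ℂ (v '' (A : Set ι)) :=
            Submodule.subset_span ⟨q, hq, rfl⟩
          rwa [hbot, Submodule.mem_bot] at this
        have : u q ∈ Wp := by
          rw [hv] at hvq
          simpa [Submodule.Quotient.mk_eq_zero] using hvq
        obtain ⟨a, ha⟩ := Submodule.mem_span_singleton.mp this
        have hqp : (q : PN N) = p := by
          have hmk := (Projectivization.mk_eq_mk_iff' ℂ ((q : PN N).rep) (p.rep)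
            (Projectivization.rep_nonzero _) (Projectivization.rep_nonzero _)).mpr ⟨a, ha⟩
          rwa [Projectivization.mk_rep, Projectivization.mk_rep] at hmk
        exact (Finset.mem_erase.mp q.2).1 hqp
      set T : Finset (PN N) := insert p (A.image (fun q : ι => (q : PN N))) with hT
      have hTS : T ⊆ S := by
        rw [hT]
        refine Finset.insert_subset hp ?_
        intro x hx
        obtain ⟨q, _, rfl⟩ := Finset.mem_image.mp hx
        exact Finset.mem_of_mem_erase q.2
      have hreps : ∀ x ∈ T, x.rep ∈ WA := by
        intro x hx
        rcases Finset.mem_insert.mp hx with rfl | hx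
        · exact hpWA
        · obtain ⟨q, hqA, rfl⟩ := Finset.mem_image.mp hx
          exact Submodule.subset_span (Set.mem_insert_iff.mpr (Or.inr ⟨q, hqA, rfl⟩))
      have himg : p ∉ A.image (fun q : ι => (q : PN N)) := by
        intro hmem
        obtain ⟨q2, _, hq'⟩ := Finset.mem_image.mp hmem
        exact (Finset.mem_erase.mp q2.2).1 hq'
      have hinj : Function.Injective (fun q : ι => (q : PN N)) := fun a b hab => Subtype.ext hab
      have hTcard : T.card = A.card + 1 := by
        rw [hT, Finset.card_insert_of_notMem himg, Finset.card_image_of_injective _ hinj]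
      have := hplanes k hk1 WA hrank T hTS hreps
      omega
  obtain ⟨F, hdisj, hind, hcov⟩ := horn v H
  -- p is not in the span of the points of each class
  have hpnot : ∀ i : Fin d, p.rep ∉ Submodule.span ℂ (u '' ((F i : Finset ι) : Set ι)) := by
    intro i hmem
    obtain ⟨c, hcs, hcsum⟩ := mem_spanF_iff.mp hmem
    have hq : ∑ y ∈ F i, c y • v y = 0 := by
      have := congrArg Wp.mkQ hcsum
      rw [map_sum, hmkp] at this
      simpa [hv] using this
    have hc0 : ∀ y ∈ F i, c y = 0 := hind i c hq
    rw [← hcsum] at hprep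
    exact hprep (Finset.sum_eq_zero fun y hy => by rw [hc0 y hy, zero_smul])
  -- dual functionals
  have hphi : ∀ i : Fin d, ∃ φ : Module.Dual ℂ (Fin (N + 1) → ℂ), φ p.rep = 1 ∧
      ∀ w ∈ Submodule.span ℂ (u '' ((F i : Finset ι) : Set ι)), φ w = 0 := by
    intro i
    set Wi := Submodule.span ℂ (u '' ((F i : Finset ι) : Set ι)) with hWi
    have hne : (Wi.mkQ p.rep : (Fin (N + 1) → ℂ) ⧸ Wi) ≠ 0 := by
      rw [Submodule.mkQ_apply, Ne, Submodule.Quotient.mk_eq_zero]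
      exact hpnot i
    have : ¬ ∀ ψ : Module.Dual ℂ ((Fin (N + 1) → ℂ) ⧸ Wi), ψ (Wi.mkQ p.rep) = 0 := by
      rw [Module.forall_dual_apply_eq_zero_iff]
      exact hne
    push_neg at this
    obtain ⟨ψ, hψ⟩ := this
    refine ⟨(ψ (Wi.mkQ p.rep))⁻¹ • (ψ.comp Wi.mkQ), ?_, ?_⟩
    · simp only [LinearMap.smul_apply, LinearMap.comp_apply, smul_eq_mul]
      exact inv_mul_cancel₀ hψ
    · intro w hw
      have : Wi.mkQ w = 0 := by
        rw [Submodule.mkQ_apply, Submodule.Quotient.mk_eq_zero]; exact hw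
      simp [LinearMap.comp_apply, this]
  choose φ hφ1 hφ0 using hphi
  -- the linear forms as polynomials
  set L : Fin d → MvPolynomial (Fin (N + 1)) ℂ :=
    fun i => ∑ j : Fin (N + 1), MvPolynomial.C (φ i (Pi.single j 1)) * MvPolynomial.X j with hL
  have hevalL : ∀ (i : Fin d) (x : (Fin (N + 1) → ℂ)), eval x (L i) = φ i x := by
    intro i x
    rw [hL]
    rw [map_sum]
    have : ∀ j : Fin (N + 1), eval x (MvPolynomial.C (φ i (Pi.single j 1)) * MvPolynomial.X j)
        = x j • φ i (Pi.single j 1) := by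
      intro j
      rw [eval_mul, eval_C, eval_X, smul_eq_mul, mul_comm]
    rw [Finset.sum_congr rfl fun j _ => this j]
    have hxp := LinearMap.pi_apply_eq_sum_univ (φ i) x
    have hsingle : ∀ j : Fin (N + 1), (Pi.single j 1 : (Fin (N + 1) → ℂ)) =
        fun k => if j = k then (1 : ℂ) else 0 := by
      intro j; funext m
      rw [Pi.single_apply]
      by_cases h : m = j
      · subst h; simp
      · rw [if_neg h, if_neg (Ne.symm h)]
    rw [hxp]
    exact (Finset.sum_congr rfl fun j _ => by rw [hsingle j]).symm
  have hhomL : ∀ i : Fin d, (L i).IsHomogeneous 1 := by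
    intro i
    rw [hL]
    refine MvPolynomial.IsHomogeneous.sum _ _ _ fun j _ => ?_
    have := (MvPolynomial.isHomogeneous_C (Fin (N + 1)) (φ i (Pi.single j 1))).mul
      (MvPolynomial.isHomogeneous_X ℂ j)
    simpa using this
  refine ⟨∏ i : Fin d, L i, ?_, ?_, ?_⟩
  · have := MvPolynomial.IsHomogeneous.prod Finset.univ L (fun _ => 1)
      (fun i _ => hhomL i)
    simpa using this
  · intro q hq hqp
    have hqmem : q ∈ S.erase p := Finset.mem_erase.mpr ⟨hqp, hq⟩
    obtain ⟨i, hqi⟩ := hcov ⟨q, hqmem⟩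
    rw [map_prod]
    refine Finset.prod_eq_zero (Finset.mem_univ i) ?_
    rw [hevalL i q.rep]
    refine hφ0 i q.rep (Submodule.subset_span ⟨⟨q, hqmem⟩, hqi, rfl⟩)
  · rw [map_prod]
    have : ∀ i : Fin d, eval p.rep (L i) = 1 := fun i => by rw [hevalL i p.rep, hφ1 i]
    rw [Finset.prod_congr rfl fun i _ => this i]
    simp
end
end

section
/- Let Σ = {p₁, …, p_r} be a set of r distinct points in ℙ^N (N ≥ 2), let p ∈ ℙ^N \ Σ, and let m ≥ 1 be an integer. Suppose that no m+1 points of Σ lie on a single line together with p (i.e., every line through p contains at most m points of Σ). Then there exist at least min{r−m, ⌊r/2⌋} pairwise disjoint two-element subsets {a, b} of Σ such that the line through a and b does not contain p. -/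
open MvPolynomial

noncomputable section

/-!
Group the points of `S` by the line joining them to `p`. Two points of `S` span a line avoiding
`p` exactly when they lie in different classes, and by hypothesis every class has at most `m`
elements. A greedy matching then pairs up points from different classes: repeatedly match a
point of a largest class with a point outside it. Either the largest class size drops, or a
second class of that same maximal size exists, which forces `r ≥ 2c + 1` and leaves room for
`⌊r/2⌋` pairs.
-/

open Finset

section Matching

def IsBichromaticMatching {α β : Type*} (f : α → β) (S : Finset α) (P : Finset (α × α)) : Prop :=
  (∀ e ∈ P, e.1 ∈ S ∧ e.2 ∈ S ∧ f e.1 ≠ f e.2) ∧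
    (P : Set (α × α)).Pairwise fun e e' => Disjoint ({e.1, e.2} : Set α) {e'.1, e'.2}

variable {α β : Type*} [DecidableEq α] {f : α → β}

lemma card_filter_erase_erase_le_pred_or [DecidableEq β] {S : Finset α} {c : ℕ}
    (hc : ∀ x ∈ S, #{y ∈ S | f y = f x} ≤ c) {a b : α} (ha : a ∈ S) (hb : b ∈ S)
    (hab : f a ≠ f b) (hac : #{y ∈ S | f y = f a} = c) :
    (∀ x ∈ (S.erase a).erase b, #{y ∈ (S.erase a).erase b | f y = f x} ≤ c - 1) ∨
      2 * c + 1 ≤ #S := by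
  by_contra! h
  obtain ⟨⟨x, hx, hxc⟩, hS⟩ := h
  have hxS : x ∈ S := mem_of_mem_erase (mem_of_mem_erase hx)
  rw [filter_erase, filter_erase] at hxc
  set X := {y ∈ S | f y = f x}
  have hXc : #X ≤ c := hc x hxS
  have hXa := card_le_card (erase_subset b (X.erase a))
  have hXb := card_le_card (erase_subset_erase b (erase_subset a X))
  have hax : f a ≠ f x := fun h => by
    have := card_erase_of_mem (s := X) (mem_filter.2 ⟨ha, h⟩)
    omega
  have hbx : f b ≠ f x := fun h => by
    have := card_erase_of_mem (s := X) (mem_filter.2 ⟨hb, h⟩)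
    omega
  have hX : c ≤ #X := by
    have := card_le_card (erase_subset a X)
    omega
  have hbX : b ∉ X := fun h => hbx (mem_filter.1 h).2
  have hsub : insert b X ⊆ {y ∈ S | ¬f y = f a} := by
    intro y hy
    rcases mem_insert.1 hy with rfl | hy
    · exact mem_filter.2 ⟨hb, hab.symm⟩
    · exact mem_filter.2 ⟨(mem_filter.1 hy).1, (mem_filter.1 hy).2 ▸ hax.symm⟩
  have := card_le_card hsub
  rw [card_insert_of_notMem hbX] at this
  have := card_filter_add_card_filter_not (s := S) (fun y => f y = f a)
  omega

lemma IsBichromaticMatching.insert {S : Finset α} {P : Finset (α × α)} {a b : α}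
    (hP : IsBichromaticMatching f ((S.erase a).erase b) P) (ha : a ∈ S) (hb : b ∈ S)
    (hab : f a ≠ f b) : IsBichromaticMatching f S (insert (a, b) P) := by
  have hmemS : ∀ x ∈ (S.erase a).erase b, x ∈ S ∧ x ≠ a ∧ x ≠ b := fun x hx => by
    simp only [mem_erase] at hx
    exact ⟨hx.2.2, hx.2.1, hx.1⟩
  refine ⟨fun e he => ?_, ?_⟩
  · rcases mem_insert.1 he with rfl | he
    · exact ⟨ha, hb, hab⟩
    · obtain ⟨h1, h2, h3⟩ := hP.1 e he
      exact ⟨(hmemS _ h1).1, (hmemS _ h2).1, h3⟩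
  · rw [coe_insert, Set.pairwise_insert]
    refine ⟨hP.2, fun e he _ => ?_⟩
    obtain ⟨h1, h2, -⟩ := hP.1 e he
    obtain ⟨-, h1a, h1b⟩ := hmemS _ h1
    obtain ⟨-, h2a, h2b⟩ := hmemS _ h2
    have : Disjoint ({a, b} : Set α) {e.1, e.2} := by
      simp [h1a, h1b, h2a, h2b]
    exact ⟨this, this.symm⟩

theorem exists_isBichromaticMatching_of_card_fiber_le [DecidableEq β] (f : α → β) (m : ℕ) (S : Finset α)
    (hS : ∀ a ∈ S, #{x ∈ S | f x = f a} ≤ m) :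
    ∃ P, min (#S - m) (#S / 2) ≤ #P ∧ IsBichromaticMatching f S P := by
  induction hn : #S using Nat.strong_induction_on generalizing S m with
  | _ n ih =>
  by_cases h0 : min (n - m) (n / 2) = 0
  · exact ⟨∅, by simp [h0], by simp, by simp⟩
  obtain ⟨a, ha, hmax⟩ := exists_max_image S (fun x => #{y ∈ S | f y = f x})
    (card_pos.1 (by omega))
  set c := #{y ∈ S | f y = f a} with hc
  have hcm : c ≤ m := hS a ha
  have hc1 : 1 ≤ c := card_pos.2 ⟨a, mem_filter.2 ⟨ha, rfl⟩⟩
  obtain ⟨b, hb, hba⟩ : ∃ b ∈ S, f b ≠ f a := by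
    by_contra! h
    rw [hc, filter_true_of_mem h] at hcm
    omega
  set S' := (S.erase a).erase b
  have hS' : #S' = n - 2 := by
    rw [card_erase_of_mem (mem_erase.2 ⟨fun h => hba (congrArg f h), hb⟩), card_erase_of_mem ha]
    omega
  obtain ⟨m', hm', hS'm'⟩ : ∃ m', min (n - m) (n / 2) ≤ min (n - 2 - m') ((n - 2) / 2) + 1 ∧
      ∀ x ∈ S', #{y ∈ S' | f y = f x} ≤ m' := by
    rcases card_filter_erase_erase_le_pred_or hmax ha hb (Ne.symm hba) rfl with h | h
    · exact ⟨c - 1, by omega, h⟩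
    · refine ⟨c, by omega, fun x hx => ?_⟩
      have hsub : S' ⊆ S := (erase_subset _ _).trans (erase_subset _ _)
      exact (card_le_card (filter_subset_filter _ hsub)).trans (hmax x (hsub hx))
  obtain ⟨P, hP, hPS'⟩ := ih (n - 2) (by omega) m' S' hS'm' hS'
  have habP : (a, b) ∉ P := fun h => by simpa [S'] using (hPS'.1 _ h).1
  refine ⟨insert (a, b) P, ?_, hPS'.insert ha hb (Ne.symm hba)⟩
  rw [card_insert_of_notMem habP]
  omega

end Matching

section Lines

open scoped LinearAlgebra.Projectivization

variable {K V : Type*} [Field K] [AddCommGroup V] [Module K V]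

lemma Projectivization.finrank_span_rep_pair {x y : ℙ K V} (hxy : x ≠ y) :
    Module.finrank K (Submodule.span K {x.rep, y.rep}) = 2 := by
  have hli := independent_iff.1 ((independent_pair_iff_ne x y).2 hxy)
  rw [← Set.image_pair, ← Matrix.range_cons_cons_empty x y ![], ← Set.range_comp]
  simpa using finrank_span_eq_card hli

lemma Projectivization.span_rep_pair_eq {W : Submodule K V}
    (hW : Module.finrank K W = 2) {x y : ℙ K V} (hxy : x ≠ y) (hx : x.rep ∈ W) (hy : y.rep ∈ W) :
    Submodule.span K {x.rep, y.rep} = W := by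
  have : Module.Finite K W := Module.finite_of_finrank_eq_succ hW
  exact Submodule.eq_of_le_of_finrank_eq (Submodule.span_le.2 (Set.pair_subset hx hy))
    ((finrank_span_rep_pair hxy).trans hW.symm)

lemma Projectivization.span_rep_pair_eq_of_rep_mem {p a b : ℙ K V} (hpa : p ≠ a) (hpb : p ≠ b)
    (hab : a ≠ b) (hp : p.rep ∈ Submodule.span K {a.rep, b.rep}) :
    Submodule.span K {p.rep, a.rep} = Submodule.span K {p.rep, b.rep} := by
  have hW := finrank_span_rep_pair hab
  have ha : a.rep ∈ Submodule.span K {a.rep, b.rep} := Submodule.subset_span (by simp)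
  have hb : b.rep ∈ Submodule.span K {a.rep, b.rep} := Submodule.subset_span (by simp)
  rw [span_rep_pair_eq hW hpa hp ha, span_rep_pair_eq hW hpb hp hb]

end Lines

theorem disjoint_pairs_spanning_lines_avoiding_point_general
    (N : ℕ) (r m : ℕ)
    (S : Finset (PN N)) (hr : S.card = r)
    (p : PN N) (hp : p ∉ S)
    (hline : ∀ T : Finset (PN N), T ⊆ S →
      (∃ W : Submodule ℂ (Fin (N + 1) → ℂ), Module.finrank ℂ W = 2 ∧
        p.rep ∈ W ∧ ∀ q ∈ T, q.rep ∈ W) → T.card ≤ m) :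
    ∃ P : Finset (PN N × PN N),
      min (r - m) (r / 2) ≤ P.card ∧
      (∀ e ∈ P, e.1 ∈ S ∧ e.2 ∈ S ∧ e.1 ≠ e.2 ∧
        p.rep ∉ Submodule.span ℂ ({e.1.rep, e.2.rep} : Set (Fin (N + 1) → ℂ))) ∧
      (∀ e ∈ P, ∀ e' ∈ P, e ≠ e' →
        ({e.1, e.2} : Set (PN N)) ∩ ({e'.1, e'.2} : Set (PN N)) = ∅) := by
  classical
  let line (a : PN N) : Submodule ℂ (Fin (N + 1) → ℂ) := Submodule.span ℂ {p.rep, a.rep}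
  have hpS : ∀ a ∈ S, p ≠ a := fun a ha h => hp (h ▸ ha)
  have hfiber : ∀ a ∈ S, #{x ∈ S | line x = line a} ≤ m := fun a ha =>
    hline _ (filter_subset _ _) ⟨line a, Projectivization.finrank_span_rep_pair (hpS a ha),
      Submodule.subset_span (by simp), fun q hq =>
        (mem_filter.1 hq).2 ▸ Submodule.subset_span (by simp)⟩
  obtain ⟨P, hcard, hmem, hdisj⟩ := exists_isBichromaticMatching_of_card_fiber_le line m S hfiber
  refine ⟨P, hr ▸ hcard, fun e he => ?_, fun e he e' he' hne => (hdisj he he' hne).inter_eq⟩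
  obtain ⟨h1, h2, hne⟩ := hmem e he
  have he12 : e.1 ≠ e.2 := fun h => hne (congrArg line h)
  exact ⟨h1, h2, he12, fun h => hne <|
    Projectivization.span_rep_pair_eq_of_rep_mem (hpS _ h1) (hpS _ h2) he12 h⟩

/-- Let `S` be a set of `r` distinct points of `ℙ^N` (`N ≥ 2`), `p ∉ S`, and
suppose every line through `p` contains at most `m` points of `S`. Then there
are at least `min {r−m, ⌊r/2⌋}` pairwise disjoint two-element subsets of `S`
each of which spans a line not containing `p`. -/
theorem disjoint_pairs_spanning_lines_avoiding_point
    (N : ℕ) (hN : 2 ≤ N) (r m : ℕ) (hm : 1 ≤ m)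
    (S : Finset (PN N)) (hr : S.card = r)
    (p : PN N) (hp : p ∉ S)
    (hline : ∀ T : Finset (PN N), T ⊆ S →
      (∃ W : Submodule ℂ (Fin (N + 1) → ℂ), Module.finrank ℂ W = 2 ∧
        p.rep ∈ W ∧ ∀ q ∈ T, q.rep ∈ W) → T.card ≤ m) :
    ∃ P : Finset (PN N × PN N),
      min (r - m) (r / 2) ≤ P.card ∧
      (∀ e ∈ P, e.1 ∈ S ∧ e.2 ∈ S ∧ e.1 ≠ e.2 ∧
        p.rep ∉ Submodule.span ℂ ({e.1.rep, e.2.rep} : Set (Fin (N + 1) → ℂ))) ∧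
      (∀ e ∈ P, ∀ e' ∈ P, e ≠ e' →
        ({e.1, e.2} : Set (PN N)) ∩ ({e'.1, e'.2} : Set (PN N)) = ∅) :=
  disjoint_pairs_spanning_lines_avoiding_point_general N r m S hr p hp hline
end
end
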